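/- Let ∇ be the torsion-free affine connection on ℝ³ whose only nonzero Christoffel symbols are Γ²₁₁ = f₁, Γ²₂₂ = f₂, Γ²₃₃ = f₃ for smooth functions f₁, f₂, f₃ : ℝ³ → ℝ. Then ∇ is affine Szabó (i.e. at every point p ∈ ℝ³ the characteristic polynomial of the affine Szabó operator S(X) equals λ³ for every X ∈ ℝ³) if and only if the Ricci tensor of ∇ is cyclic parallel at every point of ℝ³. -/

import Mathlib

open scoped BigOperators

noncomputable section

variable {ι : Type} [Fintype ι] [DecidableEq ι]

/-- Partial derivative in the `i`-th coordinate direction. -/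
def pd (i : ι) (f : (ι → ℝ) → ℝ) : (ι → ℝ) → ℝ :=
  fun p => fderiv ℝ f p (Pi.single i 1)

/-- Curvature components `R^l_{ijk}` of the torsion-free connection with Christoffel
symbols `Γ k i j = Γᵏᵢⱼ`:
`Rˡᵢⱼₖ = ∂ᵢΓˡⱼₖ − ∂ⱼΓˡᵢₖ + Σₘ (Γˡᵢₘ Γᵐⱼₖ − Γˡⱼₘ Γᵐᵢₖ)`. -/
def curv (Γ : ι → ι → ι → (ι → ℝ) → ℝ) (l i j k : ι) : (ι → ℝ) → ℝ :=
  fun p => pd i (Γ l j k) p - pd j (Γ l i k) p +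
    ∑ m, (Γ l i m p * Γ m j k p - Γ l j m p * Γ m i k p)

/-- Components `(∇ₕR)ˡᵢⱼₖ` of the covariant derivative of the curvature. -/
def covR (Γ : ι → ι → ι → (ι → ℝ) → ℝ) (h l i j k : ι) : (ι → ℝ) → ℝ :=
  fun p => pd h (curv Γ l i j k) p +
    ∑ m, (Γ l h m p * curv Γ m i j k p - Γ m h i p * curv Γ l m j k p
      - Γ m h j p * curv Γ l i m k p - Γ m h k p * curv Γ l i j m p)

/-- The Szabó operator `S(X) : Y ↦ (∇_X R)(Y,X)X` at the point `p`, as a matrix: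
`(S(X)Y)ˡ = Σ_{h,i,j,k} Xʰ Yⁱ Xʲ Xᵏ (∇ₕR)ˡᵢⱼₖ`. -/
def szabo (Γ : ι → ι → ι → (ι → ℝ) → ℝ) (p X : ι → ℝ) : Matrix ι ι ℝ :=
  Matrix.of fun l i => ∑ h, ∑ j, ∑ k, X h * X j * X k * covR Γ h l i j k p

/-- Ricci tensor `Ricⱼₖ = Σᵢ Rⁱᵢⱼₖ`. -/
def ricci (Γ : ι → ι → ι → (ι → ℝ) → ℝ) (j k : ι) : (ι → ℝ) → ℝ :=
  fun p => ∑ i, curv Γ i i j k p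

/-- Covariant derivative of the Ricci tensor,
`(∇ᵢRic)ⱼₖ = ∂ᵢRicⱼₖ − Σₘ (Γᵐᵢⱼ Ricₘₖ + Γᵐᵢₖ Ricⱼₘ)`. -/
def covRic (Γ : ι → ι → ι → (ι → ℝ) → ℝ) (i j k : ι) : (ι → ℝ) → ℝ :=
  fun p => pd i (ricci Γ j k) p -
    ∑ m, (Γ m i j p * ricci Γ m k p + Γ m i k p * ricci Γ j m p)

/-- The Ricci tensor is cyclic parallel at `p`. -/
def CyclicParallelAt (Γ : ι → ι → ι → (ι → ℝ) → ℝ) (p : ι → ℝ) : Prop :=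
  ∀ i j k, covRic Γ i j k p + covRic Γ j k i p + covRic Γ k i j p = 0

/-- Christoffel symbols `Γ̃ᶜₐᵦ = ½ Σ_d g̃ᶜᵈ (∂ₐ g̃ᵦ_d + ∂ᵦ g̃ₐ_d − ∂_d g̃ₐᵦ)` of the
Levi-Civita connection of a pseudo-Riemannian metric `g`. -/
def christoffel (g : (ι → ℝ) → Matrix ι ι ℝ) (c a b : ι) : (ι → ℝ) → ℝ :=
  fun p => (1 / 2) * ∑ d, (g p)⁻¹ c d *
    (pd a (fun q => g q b d) p + pd b (fun q => g q a d) p - pd d (fun q => g q a b) p)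

end

/-- The torsion-free connection on `ℝ³` whose only nonzero Christoffel symbols are
`Γ²₁₁ = f₁`, `Γ²₂₂ = f₂`, `Γ²₃₃ = f₃` (indices `1,2,3` are `0,1,2` in `Fin 3`). -/
def gammaF (f₁ f₂ f₃ : (Fin 3 → ℝ) → ℝ) : Fin 3 → Fin 3 → Fin 3 → (Fin 3 → ℝ) → ℝ :=
  fun k i j =>
    if k = 1 ∧ i = 0 ∧ j = 0 then f₁
    else if k = 1 ∧ i = 1 ∧ j = 1 then f₂
    else if k = 1 ∧ i = 2 ∧ j = 2 then f₃
    else 0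


/-!
Only `Γ¹` is nonzero, so the curvature and its covariant derivative take values in the line
spanned by `∂₁` (indices of `Fin 3`). The Szabó operator then has a single nonzero row, its
characteristic polynomial is `λ² (λ - S(X)₁₁)`, and `S(X)₁₁ = Σ (∇ₕRic)ⱼₖ Xʰ Xʲ Xᵏ` is the cubic
form of `∇Ric`. A cubic form vanishes identically iff its full symmetrisation does, and the
symmetrisation of `∇Ric` is the cyclic sum symmetrised once more in its last two slots. For this
connection the cyclic sum is already symmetric: the only possible defect is
`∂₂∂₀f₂ - ∂₀∂₂f₂`, which vanishes by Schwarz's theorem.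
-/

section CubicForm

variable {ι : Type*} [Fintype ι]

def trilinearForm (A : ι → ι → ι → ℝ) (x y z : ι → ℝ) : ℝ :=
  ∑ h, ∑ j, ∑ k, x h * y j * z k * A h j k

def cubicForm (A : ι → ι → ι → ℝ) (X : ι → ℝ) : ℝ :=
  trilinearForm A X X X

def cyclicSum (A : ι → ι → ι → ℝ) (i j k : ι) : ℝ :=
  A i j k + A j k i + A k i j

theorem cubicForm_polarization (A : ι → ι → ι → ℝ) (x y z : ι → ℝ) :
    cubicForm A (x + y + z) - cubicForm A (x + y) - cubicForm A (y + z) - cubicForm A (z + x)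
        + cubicForm A x + cubicForm A y + cubicForm A z =
      trilinearForm A x y z + trilinearForm A x z y + trilinearForm A y x z
        + trilinearForm A y z x + trilinearForm A z x y + trilinearForm A z y x := by
  simp only [cubicForm, trilinearForm, Pi.add_apply, ← Finset.sum_add_distrib,
    ← Finset.sum_sub_distrib]
  refine Finset.sum_congr rfl fun _ _ => Finset.sum_congr rfl fun _ _ =>
    Finset.sum_congr rfl fun _ _ => by ring

theorem trilinearForm_single [DecidableEq ι] (A : ι → ι → ι → ℝ) (i j k : ι) :
    trilinearForm A (Pi.single i 1) (Pi.single j 1) (Pi.single k 1) = A i j k := by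
  simp [trilinearForm, Pi.single_apply]

theorem cubicForm_cyclicSum (A : ι → ι → ι → ℝ) (X : ι → ℝ) :
    cubicForm (cyclicSum A) X = 3 * cubicForm A X := by
  have rotate : ∀ B : ι → ι → ι → ℝ, cubicForm (fun h j k => B j k h) X = cubicForm B X := by
    intro B
    simp only [cubicForm, trilinearForm]
    rw [Finset.sum_comm]
    refine Finset.sum_congr rfl fun _ _ => ?_
    rw [Finset.sum_comm]
    exact Finset.sum_congr rfl fun _ _ => Finset.sum_congr rfl fun _ _ => by ring
  have hsplit : cubicForm (cyclicSum A) X = cubicForm A X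
      + cubicForm (fun h j k => A j k h) X + cubicForm (fun h j k => A k h j) X := by
    simp only [cubicForm, trilinearForm, cyclicSum, ← Finset.sum_add_distrib]
    refine Finset.sum_congr rfl fun _ _ => Finset.sum_congr rfl fun _ _ =>
      Finset.sum_congr rfl fun _ _ => by ring
  have h₁ := rotate A
  have h₂ := rotate fun h j k => A j k h
  linarith

theorem cubicForm_eq_zero_iff [DecidableEq ι] {A : ι → ι → ι → ℝ}
    (hswap : ∀ i j k, cyclicSum A i j k = cyclicSum A i k j) :
    (∀ X, cubicForm A X = 0) ↔ ∀ i j k, cyclicSum A i j k = 0 := by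
  refine ⟨fun hA i j k => ?_, fun hA X => ?_⟩
  · have hpol := cubicForm_polarization A (Pi.single i 1) (Pi.single j 1) (Pi.single k 1)
    simp only [hA, trilinearForm_single] at hpol
    have := hswap i j k
    simp only [cyclicSum] at this ⊢
    linarith
  · have h₃ := cubicForm_cyclicSum A X
    rw [show cyclicSum A = 0 from funext₃ hA] at h₃
    have h₀ : cubicForm (0 : ι → ι → ι → ℝ) X = 0 := by simp [cubicForm, trilinearForm]
    linarith

/-- A triple with a repeated index is swap-invariant for every `A`, and a triple of distinct
indices in `Fin 3` is a rotation of `(0, 1, 2)` or of `(0, 2, 1)`. -/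
theorem cyclicSum_swap_of_fin_three (A : Fin 3 → Fin 3 → Fin 3 → ℝ)
    (h : cyclicSum A 0 1 2 = cyclicSum A 0 2 1) (i j k : Fin 3) :
    cyclicSum A i j k = cyclicSum A i k j := by
  simp only [cyclicSum] at h ⊢
  fin_cases i <;> fin_cases j <;> fin_cases k <;> simp <;> linarith

end CubicForm

open Polynomial in
theorem charpoly_eq_X_pow_three_iff {R : Type*} [CommRing R] (M : Matrix (Fin 3) (Fin 3) R)
    (h₀ : ∀ i, M 0 i = 0) (h₂ : ∀ i, M 2 i = 0) : M.charpoly = X ^ 3 ↔ M 1 1 = 0 := by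
  have hM : M.charpoly = X ^ 3 - C (M 1 1) * X ^ 2 := by
    rw [Matrix.charpoly, Matrix.det_fin_three]
    simp [Matrix.charmatrix_apply_eq, Matrix.charmatrix_apply_ne, h₀, h₂]
    ring
  rw [hM, sub_eq_self, C_mul_X_pow_eq_monomial, monomial_eq_zero_iff]

section Connection

variable {ι : Type} [DecidableEq ι]

theorem pd_zero (i : ι) : pd i (0 : (ι → ℝ) → ℝ) = 0 := by
  funext p
  simp [pd]

variable [Fintype ι]

theorem pd_neg (i : ι) (f : (ι → ℝ) → ℝ) : pd i (-f) = -pd i f := by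
  funext p
  exact congrArg (· (Pi.single i 1)) (fderiv_neg (𝕜 := ℝ) (f := f) (x := p))

theorem pd_pd_comm {f : (ι → ℝ) → ℝ} (hf : ContDiff ℝ 2 f) (i j : ι) (p : ι → ℝ) :
    pd i (pd j f) p = pd j (pd i f) p := by
  have hdf : DifferentiableAt ℝ (fderiv ℝ f) p :=
    (hf.fderiv_right (m := 1) le_rfl).differentiable one_ne_zero p
  have hpd : ∀ a b, pd a (pd b f) p = fderiv ℝ (fderiv ℝ f) p (Pi.single a 1) (Pi.single b 1) :=
    fun a b => by
      rw [pd, show pd b f = fun q => fderiv ℝ f q (Pi.single b 1) from rfl,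
        fderiv_clm_apply hdf (differentiableAt_const _)]
      simp
  rw [hpd, hpd, (hf.contDiffAt.isSymmSndFDerivAt (by simp)).eq]

theorem covRic_eq_pd_ricci {Γ : ι → ι → ι → (ι → ℝ) → ℝ} (hΓ : ∀ l i j, i ≠ j → Γ l i j = 0)
    {i j k : ι} (hij : i ≠ j) (hik : i ≠ k) (p : ι → ℝ) :
    covRic Γ i j k p = pd i (ricci Γ j k) p := by
  simp [covRic, hΓ _ _ _ hij, hΓ _ _ _ hik]

variable {Γ : ι → ι → ι → (ι → ℝ) → ℝ} {r : ι}

theorem curv_eq_zero_of_ne (hΓ : ∀ l, l ≠ r → ∀ i j, Γ l i j = 0) {l : ι} (hl : l ≠ r)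
    (i j k : ι) : curv Γ l i j k = 0 := by
  funext p
  simp [curv, hΓ l hl, pd_zero]

theorem ricci_eq_curv (hΓ : ∀ l, l ≠ r → ∀ i j, Γ l i j = 0) (j k : ι) :
    ricci Γ j k = curv Γ r r j k := by
  funext p
  exact Finset.sum_eq_single r (fun l _ hl => by rw [curv_eq_zero_of_ne hΓ hl]; rfl) (by simp)

theorem covR_eq_zero_of_ne (hΓ : ∀ l, l ≠ r → ∀ i j, Γ l i j = 0) {l : ι} (hl : l ≠ r)
    (h i j k : ι) (p : ι → ℝ) : covR Γ h l i j k p = 0 := by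
  simp [covR, hΓ l hl, curv_eq_zero_of_ne hΓ hl, pd_zero]

theorem covR_self_eq_covRic (hΓ : ∀ l, l ≠ r → ∀ i j, Γ l i j = 0) (h j k : ι) (p : ι → ℝ) :
    covR Γ h r r j k p = covRic Γ h j k p := by
  have hcurv : ∑ m, Γ r h m p * curv Γ m r j k p = Γ r h r p * curv Γ r r j k p :=
    Finset.sum_eq_single r (fun m _ hm => by simp [curv_eq_zero_of_ne hΓ hm]) (by simp)
  have hΓr : ∑ m, Γ m h r p * curv Γ r m j k p = Γ r h r p * curv Γ r r j k p :=
    Finset.sum_eq_single r (fun m _ hm => by simp [hΓ m hm]) (by simp)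
  simp only [covR, covRic, ricci_eq_curv hΓ, Finset.sum_sub_distrib, Finset.sum_add_distrib,
    hcurv, hΓr]
  ring

theorem szabo_apply_of_ne (hΓ : ∀ l, l ≠ r → ∀ i j, Γ l i j = 0) {l : ι} (hl : l ≠ r)
    (p X : ι → ℝ) (i : ι) : szabo Γ p X l i = 0 := by
  simp [szabo, covR_eq_zero_of_ne hΓ hl]

theorem szabo_apply_self (hΓ : ∀ l, l ≠ r → ∀ i j, Γ l i j = 0) (p X : ι → ℝ) :
    szabo Γ p X r r = cubicForm (fun h j k => covRic Γ h j k p) X := by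
  simp [szabo, cubicForm, trilinearForm, covR_self_eq_covRic hΓ]

end Connection

section GammaF

variable (f₁ f₂ f₃ : (Fin 3 → ℝ) → ℝ)

theorem gammaF_eq_zero_of_ne_one : ∀ l, l ≠ 1 → ∀ i j, gammaF f₁ f₂ f₃ l i j = 0 := by
  intro l hl i j
  simp [gammaF, hl]

theorem gammaF_eq_zero_of_ne : ∀ l i j, i ≠ j → gammaF f₁ f₂ f₃ l i j = 0 := by
  intro l i j hij
  fin_cases i <;> fin_cases j <;> simp_all [gammaF]

theorem ricci_gammaF_one (k : Fin 3) : ricci (gammaF f₁ f₂ f₃) 1 k = 0 := by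
  rw [ricci_eq_curv (gammaF_eq_zero_of_ne_one f₁ f₂ f₃)]
  funext p
  simp [curv]

theorem ricci_gammaF_of_ne_one {j : Fin 3} (hj : j ≠ 1) :
    ricci (gammaF f₁ f₂ f₃) j 1 = -pd j f₂ := by
  rw [ricci_eq_curv (gammaF_eq_zero_of_ne_one f₁ f₂ f₃)]
  funext p
  fin_cases j <;> simp_all [curv, gammaF, Fin.sum_univ_three, pd_zero]

theorem ricci_gammaF_zero_two : ricci (gammaF f₁ f₂ f₃) 0 2 = 0 := by
  rw [ricci_eq_curv (gammaF_eq_zero_of_ne_one f₁ f₂ f₃)]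
  funext p
  simp [curv, gammaF, pd_zero]

theorem ricci_gammaF_two_zero : ricci (gammaF f₁ f₂ f₃) 2 0 = 0 := by
  rw [ricci_eq_curv (gammaF_eq_zero_of_ne_one f₁ f₂ f₃)]
  funext p
  simp [curv, gammaF, pd_zero]

theorem cyclicSum_covRic_gammaF_swap (hf₂ : ContDiff ℝ 2 f₂) (p : Fin 3 → ℝ) :
    cyclicSum (fun i j k => covRic (gammaF f₁ f₂ f₃) i j k p) 0 1 2 =
      cyclicSum (fun i j k => covRic (gammaF f₁ f₂ f₃) i j k p) 0 2 1 := by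
  have hΓ := gammaF_eq_zero_of_ne f₁ f₂ f₃
  simp only [cyclicSum, ne_eq, Fin.reduceEq, not_false_eq_true, covRic_eq_pd_ricci hΓ,
    ricci_gammaF_one, ricci_gammaF_zero_two, ricci_gammaF_two_zero, ricci_gammaF_of_ne_one,
    pd_zero, pd_neg, Pi.zero_apply, Pi.neg_apply, zero_add, add_zero, neg_inj]
  exact pd_pd_comm hf₂ 2 0 p

end GammaF

theorem stmt_5_general (f₁ f₂ f₃ : (Fin 3 → ℝ) → ℝ)
    (hsmooth₂ : ContDiff ℝ (⊤ : ℕ∞) f₂) :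
    (∀ (p : Fin 3 → ℝ) (X : Fin 3 → ℝ),
        (szabo (gammaF f₁ f₂ f₃) p X).charpoly = Polynomial.X ^ 3) ↔
      (∀ p : Fin 3 → ℝ, CyclicParallelAt (gammaF f₁ f₂ f₃) p) := by
  have hΓ := gammaF_eq_zero_of_ne_one f₁ f₂ f₃
  refine forall_congr' fun p => ?_
  have hswap := cyclicSum_swap_of_fin_three _
    (cyclicSum_covRic_gammaF_swap f₁ f₂ f₃ (hsmooth₂.of_le (WithTop.coe_le_coe.2 le_top)) p)
  calc (∀ X, (szabo (gammaF f₁ f₂ f₃) p X).charpoly = Polynomial.X ^ 3)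
      ↔ ∀ X, cubicForm (fun h j k => covRic (gammaF f₁ f₂ f₃) h j k p) X = 0 :=
        forall_congr' fun X => by
          rw [charpoly_eq_X_pow_three_iff _ (szabo_apply_of_ne hΓ (by decide) p X)
            (szabo_apply_of_ne hΓ (by decide) p X), szabo_apply_self hΓ]
    _ ↔ CyclicParallelAt (gammaF f₁ f₂ f₃) p := cubicForm_eq_zero_iff hswap

/-- the connection with `Γ²₁₁ = f₁`, `Γ²₂₂ = f₂`, `Γ²₃₃ = f₃` is affine Szabó
(the characteristic polynomial of the affine Szabó operator `S(X)` is `λ³` at every point,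
for every `X`) if and only if its Ricci tensor is cyclic parallel everywhere. -/
theorem stmt_5 (f₁ f₂ f₃ : (Fin 3 → ℝ) → ℝ)
    (hsmooth₁ : ContDiff ℝ (⊤ : ℕ∞) f₁) (hsmooth₂ : ContDiff ℝ (⊤ : ℕ∞) f₂)
    (hsmooth₃ : ContDiff ℝ (⊤ : ℕ∞) f₃) :
    (∀ (p : Fin 3 → ℝ) (X : Fin 3 → ℝ),
        (szabo (gammaF f₁ f₂ f₃) p X).charpoly = Polynomial.X ^ 3) ↔
      (∀ p : Fin 3 → ℝ, CyclicParallelAt (gammaF f₁ f₂ f₃) p) :=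
  stmt_5_general f₁ f₂ f₃ hsmooth₂
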